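/- Fix i₀ ∈ [n], and fix δ ∈ ℝ^d, all dual variables other than μ_{i₀}, and all penalty parameters. Then the map μ_{i₀} ↦ L(δ, Λ, μ, P, p) is differentiable at every μ_{i₀} ∈ ℝ, with partial derivative ∂L/∂μ_{i₀} = ξ(δ, μ_{i₀}, ϱ_{i₀}) = max{y·f(x_{i₀}+δ) − c, −μ_{i₀}/ϱ_{i₀}}. -/

import Mathlib

/-!
Only the `i₀`-th summands of the two `μ`-sums depend on `μ_{i₀}`, and together they form
`φ(s) = s·max{a, −s/ϱ} + (ϱ/2)·max{a, −s/ϱ}²` with `a = y·f(x_{i₀}+δ) − c`, `ϱ = ϱ_{i₀}`.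
Completing the square gives `φ(s) = (ϱ/2)·max{a + s/ϱ, 0}² − s²/(2ϱ)`, and `u ↦ max{u, 0}²`
is differentiable with derivative `2·max{u, 0}`, so
`φ'(s) = max{a + s/ϱ, 0} − s/ϱ = max{a, −s/ϱ}`.
-/

open Filter Asymptotics

theorem hasDerivAt_max_zero_sq (t : ℝ) :
    HasDerivAt (fun x : ℝ => max x 0 ^ 2) (2 * max t 0) t := by
  rcases lt_trichotomy t 0 with ht | rfl | ht
  · rw [max_eq_right ht.le, mul_zero]
    refine (hasDerivAt_const t 0).congr_of_eventuallyEq ?_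
    filter_upwards [eventually_lt_nhds ht] with x hx
    simp [max_eq_right hx.le]
  · rw [hasDerivAt_iff_isLittleO_nhds_zero]
    refine IsBigO.trans_isLittleO (g := fun h : ℝ => h ^ 2) ?_ (isLittleO_pow_id one_lt_two)
    refine IsBigO.of_bound 1 (Eventually.of_forall fun h => ?_)
    rcases le_total h 0 with hh | hh <;> simp [hh, sq_nonneg]
  · rw [max_eq_left ht.le]
    refine ((hasDerivAt_pow 2 t).congr_deriv (by ring)).congr_of_eventuallyEq ?_
    filter_upwards [eventually_gt_nhds ht] with x hx
    rw [max_eq_left hx.le]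

/-- `μ·ξ + (ϱ/2)·ξ²` at `μ = s`, where `ξ = max{a, −s/ϱ}`: the summands of `L` involving `μ_i`,
with `a = y·f(x_i+δ) − c` and `ϱ = ϱ_i`. -/
noncomputable def penaltyTerm (a ϱ s : ℝ) : ℝ :=
  s * max a (-s / ϱ) + ϱ / 2 * max a (-s / ϱ) ^ 2

theorem max_add_div_zero (a ϱ s : ℝ) : max (a + s / ϱ) 0 = max a (-s / ϱ) + s / ϱ := by
  rw [← max_add_add_right, neg_div, neg_add_cancel]

theorem penaltyTerm_eq {ϱ : ℝ} (hϱ : ϱ ≠ 0) (a s : ℝ) :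
    penaltyTerm a ϱ s = ϱ / 2 * max (a + s / ϱ) 0 ^ 2 - s ^ 2 / (2 * ϱ) := by
  rw [penaltyTerm, max_add_div_zero]
  field_simp
  ring

theorem hasDerivAt_penaltyTerm {ϱ : ℝ} (hϱ : ϱ ≠ 0) (a t : ℝ) :
    HasDerivAt (penaltyTerm a ϱ) (max a (-t / ϱ)) t := by
  have hinner : HasDerivAt (fun s => a + s / ϱ) (1 / ϱ) t :=
    ((hasDerivAt_id t).div_const ϱ).const_add a
  have hsq := ((hasDerivAt_max_zero_sq _).comp t hinner).const_mul (ϱ / 2)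
  have hφ := hsq.sub ((hasDerivAt_pow 2 t).div_const (2 * ϱ))
  rw [funext (penaltyTerm_eq hϱ a)]
  refine hφ.congr_deriv ?_
  rw [max_add_div_zero]
  field_simp
  ring

theorem hasDerivAt_sum_update {ι : Type*} [Fintype ι] [DecidableEq ι] (F : ι → ℝ → ℝ)
    (μ : ι → ℝ) (i₀ : ι) {F' t : ℝ} (h : HasDerivAt (F i₀) F' t) :
    HasDerivAt (fun s => ∑ i, F i (Function.update μ i₀ s i)) F' t := by
  simp_rw [Function.apply_update F, Finset.sum_update_of_mem (Finset.mem_univ i₀)]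
  exact h.add_const _

theorem stmt_2_general {d n q : ℕ}
    (x : Fin n → EuclideanSpace ℝ (Fin d)) (y : ℝ)
    (f : EuclideanSpace ℝ (Fin d) → ℝ)
    (g : Fin q → EuclideanSpace ℝ (Fin d) → ℝ)
    (b : Fin q → ℝ) (c : ℝ)
    (δ : EuclideanSpace ℝ (Fin d))
    (Λ : Fin n → Fin q → ℝ) (μ : Fin n → ℝ)
    (P : Fin n → Fin q → ℝ)
    (p : Fin n → ℝ) (hp : ∀ i, 0 < p i)
    (L : (Fin n → ℝ) → ℝ)
    (hL : ∀ μ' : Fin n → ℝ,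
      L μ' = (1 / 2) * ‖δ‖ ^ 2
        + ∑ i, ∑ j, Λ i j * max (g j (x i + δ) - b j) (-Λ i j / P i j)
        + ∑ i, μ' i * max (y * f (x i + δ) - c) (-μ' i / p i)
        + (1 / 2) * ∑ i, ∑ j, P i j * (max (g j (x i + δ) - b j) (-Λ i j / P i j)) ^ 2
        + (1 / 2) * ∑ i, p i * (max (y * f (x i + δ) - c) (-μ' i / p i)) ^ 2)
    (i₀ : Fin n) :
    ∀ t : ℝ, HasDerivAt
      (fun s : ℝ => L (Function.update μ i₀ s))
      (max (y * f (x i₀ + δ) - c) (-t / p i₀)) t := by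
  intro t
  set C := (1 / 2) * ‖δ‖ ^ 2
    + ∑ i, ∑ j, Λ i j * max (g j (x i + δ) - b j) (-Λ i j / P i j)
    + (1 / 2) * ∑ i, ∑ j, P i j * (max (g j (x i + δ) - b j) (-Λ i j / P i j)) ^ 2
  have hsplit : ∀ μ' : Fin n → ℝ,
      L μ' = C + ∑ i, penaltyTerm (y * f (x i + δ) - c) (p i) (μ' i) := by
    intro μ'
    simp only [hL, penaltyTerm, C, Finset.mul_sum, Finset.sum_add_distrib]
    ring_nf
  simp_rw [hsplit]
  exact (hasDerivAt_sum_update _ μ i₀ (hasDerivAt_penaltyTerm (hp i₀).ne' _ t)).const_add C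

/-- Dual gradient of the universal augmented Lagrangian with respect to a single dual
variable `μ_{i₀}`: fixing `δ`, all other dual variables, and all penalty parameters, the map
`μ_{i₀} ↦ L(δ, Λ, μ, P, p)` is differentiable at every point `t ∈ ℝ` with derivative
`ξ(δ, t, ϱ_{i₀}) = max{y·f(x_{i₀}+δ) − c, −t/ϱ_{i₀}}`. -/
theorem stmt_2 {d n q : ℕ}
    (x : Fin n → EuclideanSpace ℝ (Fin d)) (y : ℝ) (hy : y = 1 ∨ y = -1)
    (f : EuclideanSpace ℝ (Fin d) → ℝ)
    (g : Fin q → EuclideanSpace ℝ (Fin d) → ℝ)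
    (b : Fin q → ℝ) (c : ℝ)
    (δ : EuclideanSpace ℝ (Fin d))
    (Λ : Fin n → Fin q → ℝ) (μ : Fin n → ℝ)
    (P : Fin n → Fin q → ℝ) (hP : ∀ i j, 0 < P i j)
    (p : Fin n → ℝ) (hp : ∀ i, 0 < p i)
    (L : (Fin n → ℝ) → ℝ)
    (hL : ∀ μ' : Fin n → ℝ,
      L μ' = (1 / 2) * ‖δ‖ ^ 2
        + ∑ i, ∑ j, Λ i j * max (g j (x i + δ) - b j) (-Λ i j / P i j)
        + ∑ i, μ' i * max (y * f (x i + δ) - c) (-μ' i / p i)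
        + (1 / 2) * ∑ i, ∑ j, P i j * (max (g j (x i + δ) - b j) (-Λ i j / P i j)) ^ 2
        + (1 / 2) * ∑ i, p i * (max (y * f (x i + δ) - c) (-μ' i / p i)) ^ 2)
    (i₀ : Fin n) :
    ∀ t : ℝ, HasDerivAt
      (fun s : ℝ => L (Function.update μ i₀ s))
      (max (y * f (x i₀ + δ) - c) (-t / p i₀)) t :=
  stmt_2_general x y f g b c δ Λ μ P p hp L hL i₀
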